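/- Quantum union bound (fidelity-refined form): Let ρ be a density matrix and A₁,…,A_m orthogonal projectors with tr(ρ(Id−A_t)) = ε_t. Let ρ_t denote ρ conditioned on outcomes A₁,…,A_t all succeeding when measured sequentially, let Succ be the probability that all m outcomes succeed, Fail = 1 − Succ, and Loss = Σ_t ε_t. Then 1 ≤ √Succ·√F(ρ, ρ_m) + √Fail·√Loss. -/

import Mathlib

open Matrix ComplexOrder

/-- The square root of a positive semidefinite matrix, as `Matrix.PosSemidef.sqrt` was defined
in Mathlib of December 2024 (since removed). -/
noncomputable def Matrix.PosSemidef.sqrt {n 𝕜 : Type*} [Fintype n] [DecidableEq n] [RCLike 𝕜]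
    {A : Matrix n n 𝕜} (hA : A.PosSemidef) : Matrix n n 𝕜 :=
  hA.1.eigenvectorUnitary.1 * diagonal ((↑) ∘ (√·) ∘ hA.1.eigenvalues) *
    (star hA.1.eigenvectorUnitary : Matrix n n 𝕜)

/-- The Schatten 1-norm (trace norm): ‖M‖₁ = tr √(MᴴM). -/
noncomputable def traceNorm {n m : Type*} [Fintype n] [Fintype m] [DecidableEq m]
    (M : Matrix n m ℂ) : ℝ :=
  ((Matrix.posSemidef_conjTranspose_mul_self M).sqrt.trace).re

/-!
Write `W = A_m ⋯ A_1`, so that `W ρ Wᴴ = Succ • ρ_m`, and split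
`1 = tr ρ = tr (W ρ) + tr ((1 - W) ρ)`.

With `Y = W √ρ` we get `√(Y Yᴴ) = √Succ • √ρ_m`. A polar decomposition `Y = √(Y Yᴴ) V` with
`‖V‖ ≤ 1`, together with `|tr (X C)| ≤ ‖X‖₁` for contractions `C`, gives
`|tr (W ρ)| = |tr (√ρ Y)| ≤ √Succ ‖√ρ √ρ_m‖₁`.

For the other term, `1 - W = ∑ₜ (1 - A_t) W_{t-1}` with `W_t = A_t ⋯ A_1`. Cauchy–Schwarz for
`⟪x, y⟫ = tr (y ρ xᴴ)` bounds the `t`-th summand by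
`√ε_t * √(tr (W_{t-1} ρ W_{t-1}ᴴ) - tr (W_t ρ W_tᴴ))`; Cauchy–Schwarz over `t` and telescoping
give `√Loss * √Fail`.
-/

namespace Fin

variable {M : Type*} [Monoid M] {m : ℕ}

/-- `partialProdLeft f i = f (i - 1) * ⋯ * f 0`, the reverse-order analogue of `Fin.partialProd`. -/
def partialProdLeft (f : Fin m → M) (i : Fin (m + 1)) : M :=
  (partialProd (MulOpposite.op ∘ f) i).unop

@[simp] lemma partialProdLeft_zero (f : Fin m → M) : partialProdLeft f 0 = 1 := by
  simp [partialProdLeft]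

lemma partialProdLeft_succ (f : Fin m → M) (j : Fin m) :
    partialProdLeft f j.succ = f j * partialProdLeft f j.castSucc := by
  simp [partialProdLeft, partialProd_succ]

lemma partialProdLeft_last (f : Fin m → M) :
    partialProdLeft f (last m) = (List.ofFn f).reverse.prod := by
  simp [partialProdLeft, partialProd, MulOpposite.unop_list_prod, List.map_ofFn,
    Function.comp_def, List.take_of_length_le]

lemma sum_castSucc_sub_succ {G : Type*} [AddCommGroup G] : ∀ {m : ℕ} (g : Fin (m + 1) → G),
    ∑ j : Fin m, (g j.castSucc - g j.succ) = g 0 - g (last m)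
  | 0, g => by simp
  | m + 1, g => by
    rw [sum_univ_castSucc]
    simp_rw [succ_castSucc]
    rw [sum_castSucc_sub_succ (fun i => g i.castSucc)]
    simp

end Fin

namespace Matrix

variable {n : Type*} [Fintype n]

lemma PosSemidef.re_trace_nonneg {A : Matrix n n ℂ} (hA : A.PosSemidef) : 0 ≤ A.trace.re :=
  (Complex.le_def.mp hA.trace_nonneg).1

lemma PosSemidef.ofReal_re_trace {A : Matrix n n ℂ} (hA : A.PosSemidef) :
    (A.trace.re : ℂ) = A.trace :=
  (Complex.eq_re_of_ofReal_le hA.trace_nonneg).symm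

lemma PosSemidef.trace_smul_inv_trace_smul {A : Matrix n n ℂ} (hA : A.PosSemidef) :
    A.trace • A.trace⁻¹ • A = A := by
  rcases eq_or_ne A.trace 0 with h | h
  · rw [hA.trace_eq_zero_iff.mp h, smul_zero, smul_zero]
  · exact smul_inv_smul₀ h A

/-- Cauchy–Schwarz for the semi-inner product `⟪x, y⟫ = tr (y M xᴴ)`. -/
theorem PosSemidef.norm_trace_mul_mul_conjTranspose_le {M : Matrix n n ℂ} (hM : M.PosSemidef)
    (x y : Matrix n n ℂ) :
    ‖(y * M * xᴴ).trace‖ ≤ √(x * M * xᴴ).trace.re * √(y * M * yᴴ).trace.re :=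
  letI := M.toMatrixSeminormedAddCommGroup hM
  letI := M.toMatrixInnerProductSpace hM
  norm_inner_le_norm (𝕜 := ℂ) x y

/-- The paper's `ρ_t` is `postMeasurement A_t ρ_{t-1}`. -/
noncomputable def postMeasurement (A ρ : Matrix n n ℂ) : Matrix n n ℂ :=
  (ρ * A).trace⁻¹ • (A * ρ * A)

lemma trace_idempotent_mul_mul_idempotent {P : Matrix n n ℂ} (hP : IsIdempotentElem P)
    (M : Matrix n n ℂ) : (P * M * P).trace = (M * P).trace := by
  rw [trace_mul_comm, ← mul_assoc, hP.eq, trace_mul_comm]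

/-- When `tr X = 0` both sides vanish, as then `X = 0`. -/
lemma PosSemidef.postMeasurement_inv_trace_smul {X A : Matrix n n ℂ} (hX : X.PosSemidef)
    (hA : IsIdempotentElem A) :
    postMeasurement A (X.trace⁻¹ • X) = (A * X * A).trace⁻¹ • (A * X * A) := by
  rcases eq_or_ne X.trace 0 with h | h
  · simp [postMeasurement, hX.trace_eq_zero_iff.mp h]
  · rw [postMeasurement, smul_mul, trace_smul, ← trace_idempotent_mul_mul_idempotent hA,
      smul_eq_mul, Matrix.mul_smul, smul_mul, smul_smul]
    congr 1
    field_simp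

theorem PosSemidef.norm_trace_idempotent_mul_mul_le {ρ P : Matrix n n ℂ} (hρ : ρ.PosSemidef)
    (hP : P.IsHermitian) (hPP : IsIdempotentElem P) (W : Matrix n n ℂ) :
    ‖(P * W * ρ).trace‖ ≤ √(ρ * P).trace.re * √(P * (W * ρ * Wᴴ) * P).trace.re := by
  have h := hρ.norm_trace_mul_mul_conjTranspose_le P (P * W)
  rwa [hP.eq, trace_idempotent_mul_mul_idempotent hPP, conjTranspose_mul, hP.eq,
    show P * W * ρ * (Wᴴ * P) = P * (W * ρ * Wᴴ) * P by noncomm_ring,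
    show P * W * ρ * P = P * (W * ρ) * P by noncomm_ring,
    trace_idempotent_mul_mul_idempotent hPP, trace_mul_comm, ← mul_assoc] at h

variable [DecidableEq n]

section CStar

open scoped MatrixOrder Matrix.Norms.L2Operator

lemma PosSemidef.sqrt_eq_cfcSqrt {A : Matrix n n ℂ} (hA : A.PosSemidef) :
    hA.sqrt = CFC.sqrt A := by
  rw [CFC.sqrt_eq_cfc, cfc_nnreal_eq_real _ A, hA.1.cfc_eq]
  simp only [IsHermitian.cfc, Real.coe_sqrt, Real.coe_toNNReal', Unitary.conjStarAlgAut_apply,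
    PosSemidef.sqrt]
  congr 3
  funext i
  simp [max_eq_left (hA.eigenvalues_nonneg i)]

lemma traceNorm_eq_re_trace_cfcSqrt (X : Matrix n n ℂ) :
    traceNorm X = (CFC.sqrt (Xᴴ * X)).trace.re :=
  congrArg (fun M : Matrix n n ℂ => M.trace.re) (PosSemidef.sqrt_eq_cfcSqrt _)

lemma traceNorm_nonneg (X : Matrix n n ℂ) : 0 ≤ traceNorm X := by
  rw [traceNorm_eq_re_trace_cfcSqrt]
  exact (CFC.sqrt_nonneg _).posSemidef.re_trace_nonneg

lemma cfcSqrt_ofReal_smul {A : Matrix n n ℂ} (hA : 0 ≤ A) {c : ℝ} (hc : 0 ≤ c) :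
    CFC.sqrt ((c : ℂ) • A) = ((√c : ℝ) : ℂ) • CFC.sqrt A := by
  refine CFC.sqrt_unique ?_ ((CFC.sqrt_nonneg A).posSemidef.smul ?_).nonneg
  · rw [smul_mul_smul_comm, CFC.sqrt_mul_sqrt_self A hA, ← Complex.ofReal_mul,
      Real.mul_self_sqrt hc]
  · exact_mod_cast Real.sqrt_nonneg c

lemma traceNorm_ofReal_smul (X : Matrix n n ℂ) {c : ℝ} (hc : 0 ≤ c) :
    traceNorm ((c : ℂ) • X) = c * traceNorm X := by
  have hXX : ((c : ℂ) • X)ᴴ * ((c : ℂ) • X) = ((c ^ 2 : ℝ) : ℂ) • (Xᴴ * X) := by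
    rw [conjTranspose_smul, Complex.star_def, Complex.conj_ofReal, smul_mul_smul_comm]
    push_cast; ring_nf
  rw [traceNorm_eq_re_trace_cfcSqrt, traceNorm_eq_re_trace_cfcSqrt, hXX,
    cfcSqrt_ofReal_smul (posSemidef_conjTranspose_mul_self X).nonneg (sq_nonneg c),
    Real.sqrt_sq hc, trace_smul, smul_eq_mul, Complex.re_ofReal_mul]

/-- Polar decomposition `Y = |Yᴴ| V` with `V` a contraction, built from the pseudo-inverse of
`|Yᴴ|` (the real functional calculus has `0⁻¹ = 0`). -/
theorem exists_eq_cfcSqrt_mul_of_norm_le_one (Y : Matrix n n ℂ) :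
    ∃ V : Matrix n n ℂ, ‖V‖ ≤ 1 ∧ Y = CFC.sqrt (Y * Yᴴ) * V := by
  set P := CFC.sqrt (Y * Yᴴ)
  have hP : IsSelfAdjoint P := (CFC.sqrt_nonneg _).isSelfAdjoint
  have hcont : ∀ f : ℝ → ℝ, ContinuousOn f (spectrum ℝ P) :=
    (finite_real_spectrum (A := P)).continuousOn
  set Q := cfc (·⁻¹ : ℝ → ℝ) P
  have hQ : Qᴴ = Q := (cfc_predicate (·⁻¹ : ℝ → ℝ) P : IsSelfAdjoint Q)
  have hPQP : P * Q * P = P := by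
    conv_rhs => rw [← cfc_id' ℝ P hP]
    conv_lhs => rw [← cfc_id' ℝ P hP]
    rw [← cfc_mul _ _ _ (hcont _) (hcont _), ← cfc_mul _ _ _ (hcont _) (hcont _)]
    refine cfc_congr fun x _ => ?_
    rcases eq_or_ne x 0 with rfl | hx
    · simp
    · field_simp
  have hYY : Y * Yᴴ = P * P :=
    (CFC.sqrt_mul_sqrt_self _ (posSemidef_self_mul_conjTranspose Y).nonneg).symm
  refine ⟨Q * Y, ?_, ?_⟩
  · have hVV : (Q * Y) * (Q * Y)ᴴ = cfc (fun x : ℝ => x⁻¹ * x * (x * x⁻¹)) P := by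
      rw [cfc_mul _ _ _ (hcont _) (hcont _), cfc_mul _ _ _ (hcont _) (hcont _),
        cfc_mul _ _ _ (hcont _) (hcont _), cfc_id' ℝ P hP, conjTranspose_mul, hQ]
      calc Q * Y * (Yᴴ * Q) = Q * (Y * Yᴴ) * Q := by noncomm_ring
        _ = _ := by rw [hYY]; noncomm_ring
    have h : ‖(Q * Y) * (Q * Y)ᴴ‖ ≤ 1 := by
      rw [hVV]
      refine norm_cfc_le zero_le_one fun x _ => ?_
      rcases eq_or_ne x 0 with rfl | hx
      · simp
      · field_simp; simp
    rw [← star_eq_conjTranspose, CStarRing.norm_self_mul_star] at h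
    nlinarith [norm_nonneg (Q * Y)]
  · have hEP : (1 - P * Q) * P = 0 := by rw [sub_mul, hPQP, one_mul, sub_self]
    have hEY : (1 - P * Q) * Y = 0 := by
      rw [← CStarRing.mul_star_self_eq_zero_iff, star_eq_conjTranspose]
      calc (1 - P * Q) * Y * ((1 - P * Q) * Y)ᴴ = (1 - P * Q) * (Y * Yᴴ) * (1 - P * Q)ᴴ := by
            rw [conjTranspose_mul]; noncomm_ring
        _ = 0 := by rw [hYY, ← mul_assoc, hEP, zero_mul, zero_mul]
    calc Y = P * (Q * Y) + (1 - P * Q) * Y := by noncomm_ring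
      _ = _ := by rw [hEY, add_zero]

theorem norm_trace_mul_le_re_trace {C R : Matrix n n ℂ} (hC : ‖C‖ ≤ 1) (hR : 0 ≤ R) :
    ‖(C * R).trace‖ ≤ R.trace.re := by
  set S := CFC.sqrt R
  have hS : Sᴴ = S := (CFC.sqrt_nonneg R).isSelfAdjoint
  have hSS : S * S = R := CFC.sqrt_mul_sqrt_self R hR
  have hCC : Cᴴ * C ≤ 1 := by
    rw [← star_eq_conjTranspose,
      ← CStarAlgebra.norm_le_one_iff_of_nonneg _ (star_mul_self_nonneg C),
      CStarRing.norm_star_mul_self]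
    nlinarith [norm_nonneg C]
  have hCRC : (C * R * Cᴴ).trace.re ≤ R.trace.re := by
    have h := star_left_conjugate_le_conjugate hCC S
    rw [star_eq_conjTranspose, hS, mul_one, hSS] at h
    have h' : (S * (Cᴴ * C) * S).trace ≤ R.trace := (tracePositiveLinearMap n ℂ ℂ).monotone' h
    have hcyc : (S * (Cᴴ * C) * S).trace = (C * R * Cᴴ).trace := by
      rw [← hSS, show S * (Cᴴ * C) * S = (S * Cᴴ) * (C * S) by noncomm_ring, trace_mul_comm]
      congr 1; noncomm_ring
    exact hcyc ▸ (Complex.le_def.mp h').1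
  calc ‖(C * R).trace‖ = ‖(C * R * 1ᴴ).trace‖ := by simp
    _ ≤ √(1 * R * 1ᴴ).trace.re * √(C * R * Cᴴ).trace.re :=
        hR.posSemidef.norm_trace_mul_mul_conjTranspose_le 1 C
    _ ≤ √R.trace.re * √R.trace.re := by
        simp only [conjTranspose_one, one_mul, mul_one]
        gcongr
    _ = R.trace.re := Real.mul_self_sqrt hR.posSemidef.re_trace_nonneg

theorem norm_trace_mul_le_traceNorm (X : Matrix n n ℂ) {C : Matrix n n ℂ} (hC : ‖C‖ ≤ 1) :
    ‖(X * C).trace‖ ≤ traceNorm X := by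
  obtain ⟨V, hV, hXV⟩ := exists_eq_cfcSqrt_mul_of_norm_le_one Xᴴ
  set P := CFC.sqrt (Xᴴ * X)
  rw [conjTranspose_conjTranspose] at hXV
  have hX : X = Vᴴ * P := by
    have hP : Pᴴ = P := (CFC.sqrt_nonneg (Xᴴ * X)).isSelfAdjoint
    rw [← conjTranspose_conjTranspose X, hXV, conjTranspose_mul, hP]
  have hCV : ‖C * Vᴴ‖ ≤ 1 := by
    calc ‖C * Vᴴ‖ ≤ ‖C‖ * ‖Vᴴ‖ := norm_mul_le _ _
      _ ≤ 1 * 1 := by rw [l2_opNorm_conjTranspose]; gcongr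
      _ = 1 := one_mul 1
  calc ‖(X * C).trace‖ = ‖(C * Vᴴ * P).trace‖ := by
        rw [hX, mul_assoc, trace_mul_comm, mul_assoc, trace_mul_comm]
    _ ≤ P.trace.re := norm_trace_mul_le_re_trace hCV (CFC.sqrt_nonneg _)
    _ = traceNorm X := (traceNorm_eq_re_trace_cfcSqrt X).symm

theorem norm_trace_mul_le_traceNorm_mul_cfcSqrt (S Y : Matrix n n ℂ) :
    ‖(S * Y).trace‖ ≤ traceNorm (S * CFC.sqrt (Y * Yᴴ)) := by
  obtain ⟨V, hV, hYV⟩ := exists_eq_cfcSqrt_mul_of_norm_le_one Y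
  calc ‖(S * Y).trace‖ = ‖(S * CFC.sqrt (Y * Yᴴ) * V).trace‖ := by
        conv_lhs => rw [hYV, ← mul_assoc]
    _ ≤ traceNorm (S * CFC.sqrt (Y * Yᴴ)) := norm_trace_mul_le_traceNorm _ hV

theorem PosSemidef.norm_trace_mul_le_sqrt_mul_traceNorm {ρ σ W : Matrix n n ℂ}
    (hρ : ρ.PosSemidef) (hσ : σ.PosSemidef) {s : ℝ} (hs : 0 ≤ s)
    (hW : W * ρ * Wᴴ = (s : ℂ) • σ) :
    ‖(W * ρ).trace‖ ≤ √s * traceNorm (hρ.sqrt * hσ.sqrt) := by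
  rw [hρ.sqrt_eq_cfcSqrt, hσ.sqrt_eq_cfcSqrt]
  set S := CFC.sqrt ρ
  have hS : Sᴴ = S := (CFC.sqrt_nonneg ρ).isSelfAdjoint
  have hSS : S * S = ρ := CFC.sqrt_mul_sqrt_self ρ hρ.nonneg
  have hY : (W * S) * (W * S)ᴴ = (s : ℂ) • σ := by
    rw [conjTranspose_mul, hS, ← hW, ← hSS]; noncomm_ring
  calc ‖(W * ρ).trace‖ = ‖(S * (W * S)).trace‖ := by
        rw [← hSS, ← mul_assoc, trace_mul_comm]
    _ ≤ traceNorm (S * CFC.sqrt ((W * S) * (W * S)ᴴ)) :=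
        norm_trace_mul_le_traceNorm_mul_cfcSqrt S (W * S)
    _ = √s * traceNorm (S * CFC.sqrt σ) := by
        rw [hY, cfcSqrt_ofReal_smul hσ.nonneg hs, mul_smul_comm, traceNorm_ofReal_smul _
          (Real.sqrt_nonneg s)]

end CStar

variable {m : ℕ} {ρ : Matrix n n ℂ} {A : Fin m → Matrix n n ℂ}

lemma partialProdLeft_succ_conj (hA : ∀ t, (A t).IsHermitian) (t : Fin m) :
    Fin.partialProdLeft A t.succ * ρ * (Fin.partialProdLeft A t.succ)ᴴ =
      A t * (Fin.partialProdLeft A t.castSucc * ρ * (Fin.partialProdLeft A t.castSucc)ᴴ) * A t := by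
  rw [Fin.partialProdLeft_succ, conjTranspose_mul, (hA t).eq]
  noncomm_ring

theorem PosSemidef.eq_inv_trace_smul_partialProdLeft_conj (hρ : ρ.PosSemidef)
    (hρ1 : ρ.trace = 1) (hA : ∀ t, (A t).IsHermitian) (hAA : ∀ t, IsIdempotentElem (A t))
    {ρseq : Fin (m + 1) → Matrix n n ℂ} (h0 : ρseq 0 = ρ)
    (hrec : ∀ t : Fin m, ρseq t.succ = postMeasurement (A t) (ρseq t.castSucc))
    (t : Fin (m + 1)) :
    ρseq t = (Fin.partialProdLeft A t * ρ * (Fin.partialProdLeft A t)ᴴ).trace⁻¹ •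
      (Fin.partialProdLeft A t * ρ * (Fin.partialProdLeft A t)ᴴ) := by
  induction t using Fin.induction with
  | zero => simp [h0, hρ1]
  | succ t ih =>
    rw [hrec, ih, (hρ.mul_mul_conjTranspose_same _).postMeasurement_inv_trace_smul (hAA t),
      partialProdLeft_succ_conj hA]

lemma trace_one_sub_mul_partialProdLeft_conj (hA : ∀ t, (A t).IsHermitian)
    (hAA : ∀ t, IsIdempotentElem (A t)) (t : Fin m) :
    ((1 - A t) * (Fin.partialProdLeft A t.castSucc * ρ * (Fin.partialProdLeft A t.castSucc)ᴴ) *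
      (1 - A t)).trace =
      (Fin.partialProdLeft A t.castSucc * ρ * (Fin.partialProdLeft A t.castSucc)ᴴ).trace -
        (Fin.partialProdLeft A t.succ * ρ * (Fin.partialProdLeft A t.succ)ᴴ).trace := by
  rw [trace_idempotent_mul_mul_idempotent (hAA t).one_sub, mul_sub, mul_one, trace_sub,
    ← trace_idempotent_mul_mul_idempotent (hAA t), ← partialProdLeft_succ_conj hA]

/-- The failure probability, split by the step `t` at which the sequence first fails, is bounded
by Cauchy–Schwarz against the individual failure probabilities `tr (ρ (1 - A_t))`. -/
theorem PosSemidef.re_trace_one_sub_partialProdLeft_mul_le (hρ : ρ.PosSemidef)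
    (hA : ∀ t, (A t).IsHermitian) (hAA : ∀ t, IsIdempotentElem (A t)) :
    ((1 - Fin.partialProdLeft A (Fin.last m)) * ρ).trace.re ≤
      √(ρ.trace.re - (Fin.partialProdLeft A (Fin.last m) * ρ *
        (Fin.partialProdLeft A (Fin.last m))ᴴ).trace.re) *
      √(∑ t, (ρ * (1 - A t)).trace.re) := by
  set W := Fin.partialProdLeft A
  have hW0 : W 0 = 1 := Fin.partialProdLeft_zero A
  have hWsucc : ∀ t, W t.succ = A t * W t.castSucc := Fin.partialProdLeft_succ A
  set c : Fin (m + 1) → ℝ := fun t => (W t * ρ * (W t)ᴴ).trace.re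
  have hP : ∀ t, (1 - A t).IsHermitian := fun t => isHermitian_one.sub (hA t)
  have hPP : ∀ t, IsIdempotentElem (1 - A t) := fun t => (hAA t).one_sub
  have hdrop : ∀ t : Fin m,
      ((1 - A t) * (W t.castSucc * ρ * (W t.castSucc)ᴴ) * (1 - A t)).trace.re =
        c t.castSucc - c t.succ := fun t => by
    rw [trace_one_sub_mul_partialProdLeft_conj hA hAA, Complex.sub_re]
  have hsum : ∑ t : Fin m, (1 - A t) * W t.castSucc = 1 - W (Fin.last m) := by
    rw [← hW0, ← Fin.sum_castSucc_sub_succ W]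
    refine Finset.sum_congr rfl fun t _ => ?_
    rw [hWsucc, hW0]; noncomm_ring
  have hnonneg : ∀ {P M : Matrix n n ℂ}, P.IsHermitian → M.PosSemidef →
      0 ≤ (P * M * P).trace.re := fun {P} _ hPh hM => by
    have h := hM.mul_mul_conjTranspose_same P
    rw [hPh.eq] at h
    exact h.re_trace_nonneg
  calc ((1 - W (Fin.last m)) * ρ).trace.re
      = ∑ t : Fin m, ((1 - A t) * W t.castSucc * ρ).trace.re := by
        rw [← hsum, Finset.sum_mul, trace_sum, Complex.re_sum]
    _ ≤ ∑ t : Fin m, √(ρ * (1 - A t)).trace.re * √(c t.castSucc - c t.succ) := by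
        refine Finset.sum_le_sum fun t _ => ?_
        rw [← hdrop]
        exact (Complex.re_le_norm _).trans
          (hρ.norm_trace_idempotent_mul_mul_le (hP t) (hPP t) _)
    _ ≤ √(∑ t, (ρ * (1 - A t)).trace.re) * √(∑ t : Fin m, (c t.castSucc - c t.succ)) := by
        refine Real.sum_sqrt_mul_sqrt_le _ (fun t => ?_) (fun t => ?_)
        · rw [← trace_idempotent_mul_mul_idempotent (hPP t)]
          exact hnonneg (hP t) hρ
        · rw [← hdrop]
          exact hnonneg (hP t) (hρ.mul_mul_conjTranspose_same _)
    _ = _ := by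
        have hc0 : c 0 = ρ.trace.re := by simp [c, hW0]
        rw [Fin.sum_castSucc_sub_succ c, mul_comm, hc0]

end Matrix

theorem quantum_union_bound_refined_general
    {d m : ℕ} (ρ : Matrix (Fin d) (Fin d) ℂ)
    (hρ : ρ.PosSemidef) (hρ1 : ρ.trace = 1)
    (A : Fin m → Matrix (Fin d) (Fin d) ℂ)
    (hAherm : ∀ t, (A t).IsHermitian) (hAproj : ∀ t, A t * A t = A t)
    (ε : Fin m → ℝ) (hε : ∀ t, ε t = ((ρ * (1 - A t)).trace).re)
    (ρseq : Fin (m + 1) → Matrix (Fin d) (Fin d) ℂ)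
    (h0 : ρseq 0 = ρ)
    (hrec : ∀ t : Fin m, ρseq t.succ =
      ((ρseq t.castSucc * A t).trace)⁻¹ • (A t * ρseq t.castSucc * A t))
    (Succ Fail Loss : ℝ)
    (hSucc : Succ = ((((List.ofFn A).reverse.prod) * ρ * ((List.ofFn A).reverse.prod)ᴴ).trace).re)
    (hFail : Fail = 1 - Succ)
    (hLoss : Loss = ∑ t, ε t)
    (hm : (ρseq (Fin.last m)).PosSemidef) :
    1 ≤ Real.sqrt Succ * Real.sqrt (traceNorm (hρ.sqrt * hm.sqrt) ^ 2) +
      Real.sqrt Fail * Real.sqrt Loss := by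
  set W := Fin.partialProdLeft A (Fin.last m)
  have hX : (W * ρ * Wᴴ).PosSemidef := hρ.mul_mul_conjTranspose_same W
  have hW : W = (List.ofFn A).reverse.prod := Fin.partialProdLeft_last A
  have hSuccW : (W * ρ * Wᴴ).trace.re = Succ := by rw [hSucc, hW]
  have htrace : (W * ρ * Wᴴ).trace = Succ := by rw [← hSuccW, hX.ofReal_re_trace]
  have hWρ : W * ρ * Wᴴ = (Succ : ℂ) • ρseq (Fin.last m) := by
    rw [hρ.eq_inv_trace_smul_partialProdLeft_conj hρ1 hAherm hAproj h0 hrec, ← htrace,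
      hX.trace_smul_inv_trace_smul]
  have hsuccess : (W * ρ).trace.re ≤ √Succ * traceNorm (hρ.sqrt * hm.sqrt) :=
    (Complex.re_le_norm _).trans <| hρ.norm_trace_mul_le_sqrt_mul_traceNorm hm
      (hSuccW ▸ hX.re_trace_nonneg) hWρ
  have hfailure : ((1 - W) * ρ).trace.re ≤ √Fail * √Loss := by
    have h : ((1 - W) * ρ).trace.re ≤
        √(ρ.trace.re - (W * ρ * Wᴴ).trace.re) * √(∑ t, (ρ * (1 - A t)).trace.re) :=
      hρ.re_trace_one_sub_partialProdLeft_mul_le hAherm hAproj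
    rwa [hρ1, Complex.one_re, hSuccW, ← hFail, ← Finset.sum_congr rfl fun t _ => hε t,
      ← hLoss] at h
  rw [Real.sqrt_sq (traceNorm_nonneg _)]
  have hsplit : (W * ρ).trace.re + ((1 - W) * ρ).trace.re = 1 := by
    rw [sub_mul, one_mul, trace_sub, Complex.sub_re, hρ1, Complex.one_re]; ring
  linarith

/-- Quantum union bound, fidelity-refined form:
1 ≤ √Succ·√F(ρ,ρ_m) + √Fail·√Loss. -/
theorem quantum_union_bound_refined
    {d m : ℕ} (ρ : Matrix (Fin d) (Fin d) ℂ)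
    (hρ : ρ.PosSemidef) (hρ1 : ρ.trace = 1)
    (A : Fin m → Matrix (Fin d) (Fin d) ℂ)
    (hAherm : ∀ t, (A t).IsHermitian) (hAproj : ∀ t, A t * A t = A t)
    (ε : Fin m → ℝ) (hε : ∀ t, ε t = ((ρ * (1 - A t)).trace).re)
    (ρseq : Fin (m + 1) → Matrix (Fin d) (Fin d) ℂ)
    (h0 : ρseq 0 = ρ)
    (hprob : ∀ t : Fin m, 0 < ((ρseq t.castSucc * A t).trace).re)
    (hrec : ∀ t : Fin m, ρseq t.succ =
      ((ρseq t.castSucc * A t).trace)⁻¹ • (A t * ρseq t.castSucc * A t))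
    (Succ Fail Loss : ℝ)
    (hSucc : Succ = ((((List.ofFn A).reverse.prod) * ρ * ((List.ofFn A).reverse.prod)ᴴ).trace).re)
    (hFail : Fail = 1 - Succ)
    (hLoss : Loss = ∑ t, ε t)
    (hm : (ρseq (Fin.last m)).PosSemidef) :
    1 ≤ Real.sqrt Succ * Real.sqrt (traceNorm (hρ.sqrt * hm.sqrt) ^ 2) +
      Real.sqrt Fail * Real.sqrt Loss :=
  quantum_union_bound_refined_general ρ hρ hρ1 A hAherm hAproj ε hε ρseq h0 hrec Succ Fail Loss
    hSucc hFail hLoss hm
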